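/- Let V be a locally compact Hausdorff space and H = ℓ²(ℤ, ℂ). For every finite subset F of C₀(V, K(H)) and every ε > 0 there exists u ∈ C₀(V, 𝒟) with u positive, ‖u‖ ≤ 1, and ‖u a − a‖ < ε and ‖a u − a‖ < ε for all a ∈ F. That is, C₀(V, 𝒟) contains an approximate unit of C₀(V, K(H)). -/

import Mathlib

set_option maxHeartbeats 1000000
set_option synthInstance.maxHeartbeats 400000

open scoped ZeroAtInfty

noncomputable section

/-- The Hilbert space `H = ℓ²(ℤ, ℂ)`. -/
abbrev Hsp : Type := lp (fun _ : ℤ => ℂ) 2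

/-- The bounded linear operators on `H = ℓ²(ℤ, ℂ)`. -/
abbrev Op : Type := Hsp →L[ℂ] Hsp

/-- The standard orthonormal basis `(e i)_{i ∈ ℤ}` of `ℓ²(ℤ, ℂ)`. -/
def e (i : ℤ) : Hsp := lp.single 2 i (1 : ℂ)

/-- The set `𝒟` of diagonal compact operators on `ℓ²(ℤ, ℂ)`:
compact operators `T` with `T eᵢ ∈ ℂ eᵢ` for all `i`. -/
def Dset : Set Op := {T | IsCompactOperator T ∧ ∀ i : ℤ, ∃ c : ℂ, T (e i) = c • e i}

variable (M : Type) [TopologicalSpace M]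

/-- The subset of `C₀(M, B(H))` consisting of compact-operator valued functions;
this is `C₀(M, K(H))`. -/
def CK : Set C₀(M, Op) := {a | ∀ p : M, IsCompactOperator (a p)}

/-- The subset of `C₀(M, B(H))` consisting of diagonal compact-operator valued functions;
this is `C₀(M, 𝒟)`. -/
def CD : Set C₀(M, Op) := {b | ∀ p : M, b p ∈ Dset}

/-- Positivity of an element of `C₀(M, B(H))`: all of its values are positive operators. -/
def IsPos (u : C₀(M, Op)) : Prop := ∀ p : M, (u p).IsPositive

/-- `B` is a Cartan subalgebra of `A` (both viewed as subsets of the ambient C*-algebra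
`C₀(M, B(H))`): `B` is a closed *-subalgebra of `A` which is (i) commutative, (ii) contains an
approximate unit of `A`, (iii) is maximal abelian in `A`, (iv) is regular in `A` (the smallest
closed *-subalgebra of `A` containing the normalizer `N_A(B)` is `A` itself), and (v) is the
image of a faithful conditional expectation defined on `A`. -/
def IsCartanSubalgebraIn (A B : Set C₀(M, Op)) : Prop :=
  B ⊆ A ∧ IsClosed B ∧ (0 : C₀(M, Op)) ∈ B ∧
  (∀ x ∈ B, ∀ y ∈ B, x + y ∈ B) ∧
  (∀ (c : ℂ), ∀ x ∈ B, c • x ∈ B) ∧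
  (∀ x ∈ B, ∀ y ∈ B, x * y ∈ B) ∧
  (∀ x ∈ B, star x ∈ B) ∧
  -- (i) commutative
  (∀ x ∈ B, ∀ y ∈ B, x * y = y * x) ∧
  -- (ii) contains an approximate unit of `A`
  (∀ F : Finset C₀(M, Op), ↑F ⊆ A → ∀ ε : ℝ, 0 < ε →
    ∃ u ∈ B, IsPos M u ∧ ‖u‖ ≤ 1 ∧ ∀ a ∈ F, ‖u * a - a‖ < ε ∧ ‖a * u - a‖ < ε) ∧
  -- (iii) maximal abelian in `A`
  (∀ a ∈ A, (∀ b ∈ B, a * b = b * a) → a ∈ B) ∧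
  -- (iv) regular in `A`
  closure (↑(NonUnitalStarAlgebra.adjoin ℂ
      {n : C₀(M, Op) | n ∈ A ∧ (∀ b ∈ B, n * b * star n ∈ B) ∧ ∀ b ∈ B, star n * b * n ∈ B}) :
      Set C₀(M, Op)) = A ∧
  -- (v) faithful conditional expectation from `A` onto `B`
  ∃ E : C₀(M, Op) → C₀(M, Op),
    (∀ a ∈ A, ∀ a' ∈ A, E (a + a') = E a + E a') ∧
    (∀ (c : ℂ), ∀ a ∈ A, E (c • a) = c • E a) ∧
    ContinuousOn E A ∧
    (∀ a ∈ A, ‖E a‖ ≤ ‖a‖) ∧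
    (∀ a ∈ A, E a ∈ B) ∧
    (∀ b ∈ B, E b = b) ∧
    (∀ a ∈ A, IsPos M a → IsPos M (E a)) ∧
    (∀ a ∈ A, E (star a * a) = 0 → a = 0)



/-!
Let `P s` be the orthogonal projection onto the span of `eᵢ`, `i ∈ s`, for a finite `s ⊆ ℤ`.
Since `P s → 1` strongly and `‖P s‖ ≤ 1`, the maps `x ↦ P s x` and `T ↦ P s T` are equicontinuous,
so `P s T → T` in norm for compact `T`, uniformly for `T` in a compact set of compact operators.
Take a compact `K ⊆ V` off which every `a ∈ F` is small; `a(K)` is compact, so for `s` large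
`P s a(p)` is close to `a(p)` for all `p ∈ K` and `a ∈ F`. Then `u = φ • P s`, with `φ` an Urysohn
function equal to `1` on `K`, is a positive diagonal contraction with `u a ≈ a`. The estimate
`‖a u - a‖² ≤ 2 ‖u (a⋆a) - a⋆a‖`, valid in any C⋆-algebra for self-adjoint contractions `u`,
gives `a u ≈ a` once `u` also approximates every `a⋆a` from the left.
-/

open Filter Topology Metric
open scoped NNReal

theorem EquicontinuousOn.tendstoUniformlyOn_of_tendsto {ι X α : Type*} [TopologicalSpace X]
    [UniformSpace α] {F : ι → X → α} {f : X → α} {l : Filter ι} {K : Set X} (hK : IsCompact K)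
    (hF : EquicontinuousOn F K) (h : ∀ x ∈ K, Tendsto (F · x) l (𝓝 (f x))) :
    TendstoUniformlyOn F f l K := by
  have : CompactSpace K := isCompact_iff_compactSpace.mp hK
  rw [tendstoUniformlyOn_iff_tendstoUniformly_comp_coe]
  refine UniformFun.tendsto_iff_tendstoUniformly.mp ?_
  refine ((equicontinuous_restrict_iff F).mpr hF).tendsto_uniformFun_iff_pi l (f ∘ (↑)) |>.mpr ?_
  exact tendsto_pi_nhds.mpr fun x => h x x.2

section StrongConvergence

variable {𝕜 E F ι : Type*} [RCLike 𝕜] [NormedAddCommGroup E] [NormedSpace 𝕜 E]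
  [NormedAddCommGroup F] [NormedSpace 𝕜 F] {l : Filter ι} {Q : ι → F →L[𝕜] F} {C : ℝ≥0}

theorem IsCompactOperator.tendsto_comp_of_tendsto_apply (hQ : ∀ i, ‖Q i‖₊ ≤ C)
    (hQx : ∀ x, Tendsto (fun i => Q i x) l (𝓝 x)) {T : E →L[𝕜] F} (hT : IsCompactOperator T) :
    Tendsto (fun i => (Q i).comp T) l (𝓝 T) := by
  have hequi : Equicontinuous fun i => ⇑(Q i) :=
    (LipschitzWith.uniformEquicontinuous _ C fun i => (Q i).lipschitz.weaken (hQ i)).equicontinuous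
  have hunif : TendstoUniformlyOn (fun i => ⇑(Q i)) id l (closure (T '' closedBall 0 1)) :=
    (hequi.equicontinuousOn _).tendstoUniformlyOn_of_tendsto
      (hT.isCompact_closure_image_closedBall 1) fun x _ => hQx x
  rw [Metric.tendsto_nhds]
  intro ε hε
  filter_upwards [Metric.tendstoUniformlyOn_iff.mp hunif (ε / 2) (half_pos hε)] with i hi
  refine (ContinuousLinearMap.opNorm_le_of_unit_norm (half_pos hε).le fun x hx => ?_).trans_lt
    (half_lt_self hε)
  have hTx : T x ∈ closure (T '' closedBall 0 1) := subset_closure ⟨x, by simp [hx], rfl⟩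
  simpa [neg_add_eq_sub, dist_eq_norm] using (hi (T x) hTx).le

theorem tendstoUniformlyOn_comp_of_isCompactOperator {V : Type*} [TopologicalSpace V]
    (hQ : ∀ i, ‖Q i‖₊ ≤ C) (hQx : ∀ x, Tendsto (fun i => Q i x) l (𝓝 x))
    {a : V → E →L[𝕜] F} (ha : Continuous a) (hcpt : ∀ p, IsCompactOperator (a p))
    {K : Set V} (hK : IsCompact K) :
    TendstoUniformlyOn (fun i p => (Q i).comp (a p)) a l K := by
  have hlip : ∀ i, LipschitzWith C fun T : E →L[𝕜] F => (Q i).comp T := fun i =>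
    LipschitzWith.of_dist_le_mul fun T T' => by
      rw [dist_eq_norm, dist_eq_norm, ← ContinuousLinearMap.comp_sub]
      exact (ContinuousLinearMap.opNorm_comp_le _ _).trans (by gcongr; exact hQ i)
  have hcomp : TendstoUniformlyOn (fun i (T : E →L[𝕜] F) => (Q i).comp T) id l (a '' K) := by
    refine ((LipschitzWith.uniformEquicontinuous _ C hlip).equicontinuous.equicontinuousOn _)
      |>.tendstoUniformlyOn_of_tendsto (hK.image ha) ?_
    rintro _ ⟨p, -, rfl⟩
    exact (hcpt p).tendsto_comp_of_tendsto_apply hQ hQx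
  exact (hcomp.comp a).mono (Set.subset_preimage_image a K)

end StrongConvergence

theorem CStarRing.norm_mul_sub_self_sq_le {A : Type*} [NonUnitalNormedRing A] [StarRing A]
    [CStarRing A] {u : A} (hu : IsSelfAdjoint u) (hu1 : ‖u‖ ≤ 1) (a : A) :
    ‖a * u - a‖ ^ 2 ≤ 2 * ‖u * (star a * a) - star a * a‖ := by
  have hstar : star (a * u - a) * (a * u - a) =
      (u * (star a * a) - star a * a) * u - (u * (star a * a) - star a * a) := by
    rw [star_sub, star_mul, hu.star_eq]
    noncomm_ring
  set d := u * (star a * a) - star a * a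
  calc ‖a * u - a‖ ^ 2 = ‖d * u - d‖ := by rw [sq, ← CStarRing.norm_star_mul_self, hstar]
    _ ≤ ‖d‖ * ‖u‖ + ‖d‖ := (norm_sub_le _ _).trans (by gcongr; exact norm_mul_le _ _)
    _ ≤ 2 * ‖d‖ := by nlinarith [norm_nonneg d]

namespace ZeroAtInftyContinuousMap

variable {V β : Type*} [TopologicalSpace V] [SeminormedAddCommGroup β]

theorem norm_le_iff (f : C₀(V, β)) {C : ℝ} (hC : 0 ≤ C) : ‖f‖ ≤ C ↔ ∀ p, ‖f p‖ ≤ C := by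
  rw [← norm_toBCF_eq_norm, BoundedContinuousFunction.norm_le hC]
  rfl

theorem exists_isCompact_forall_norm_lt (G : Finset C₀(V, β)) {δ : ℝ} (hδ : 0 < δ) :
    ∃ K : Set V, IsCompact K ∧ ∀ p ∉ K, ∀ b ∈ G, ‖b p‖ < δ := by
  have : ∀ᶠ p in cocompact V, ∀ b ∈ G, ‖b p‖ < δ :=
    (eventually_all_finset G).mpr fun b _ => by
      simpa using Metric.tendsto_nhds.mp b.zero_at_infty' δ hδ
  obtain ⟨K, hK, hsub⟩ := mem_cocompact.mp this
  exact ⟨K, hK, fun p hp => hsub hp⟩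

end ZeroAtInftyContinuousMap

lemma e_eq_hilbertBasis (i : ℤ) : e i = (default : HilbertBasis ℤ ℂ Hsp) i := by
  classical
  rw [← HilbertBasis.repr_symm_single]
  rfl

lemma orthonormal_e : Orthonormal ℂ e := by
  simpa only [funext e_eq_hilbertBasis] using (default : HilbertBasis ℤ ℂ Hsp).orthonormal

lemma dense_span_e : (Submodule.span ℂ (Set.range e)).topologicalClosure = ⊤ := by
  simpa only [funext e_eq_hilbertBasis] using (default : HilbertBasis ℤ ℂ Hsp).dense_span

def diagSpan (s : Finset ℤ) : Submodule ℂ Hsp := Submodule.span ℂ (e '' s)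

instance (s : Finset ℤ) : FiniteDimensional ℂ (diagSpan s) :=
  FiniteDimensional.span_of_finite ℂ (s.finite_toSet.image e)

lemma monotone_diagSpan : Monotone diagSpan := fun _ _ h =>
  Submodule.span_mono (Set.image_mono (Finset.coe_subset.mpr h))

def diagProj (s : Finset ℤ) : Op := (diagSpan s).starProjection

lemma tendsto_diagProj_apply (x : Hsp) : Tendsto (fun s => diagProj s x) atTop (𝓝 x) := by
  refine Submodule.starProjection_tendsto_self diagSpan monotone_diagSpan x ?_
  rw [← dense_span_e]
  refine Submodule.topologicalClosure_mono ?_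
  rw [Submodule.span_le]
  rintro _ ⟨i, rfl⟩
  exact Submodule.mem_iSup_of_mem {i} (Submodule.subset_span ⟨i, by simp, rfl⟩)

lemma isPositive_diagProj (s : Finset ℤ) : (diagProj s).IsPositive :=
  .of_isStarProjection isStarProjection_starProjection

lemma norm_diagProj_le (s : Finset ℤ) : ‖diagProj s‖ ≤ 1 :=
  Submodule.starProjection_norm_le _

lemma isCompactOperator_diagProj (s : Finset ℤ) : IsCompactOperator (diagProj s) :=
  (isCompactOperator_of_locallyCompactSpace_dom (diagSpan s).orthogonalProjectionOnto).clm_comp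
    (diagSpan s).subtypeL

lemma diagProj_e (s : Finset ℤ) (j : ℤ) : diagProj s (e j) = if j ∈ s then e j else 0 := by
  split_ifs with h
  · exact Submodule.starProjection_eq_self_iff.mpr (Submodule.subset_span ⟨j, h, rfl⟩)
  · rw [diagProj, Submodule.starProjection_apply_eq_zero_iff]
    refine (Submodule.isOrtho_span.mpr ?_).symm (Submodule.mem_span_singleton_self (e j))
    rintro _ ⟨i, hi, rfl⟩ _ rfl
    exact orthonormal_e.inner_eq_zero (ne_of_mem_of_not_mem hi h)

lemma diagProj_mem_Dset (s : Finset ℤ) : diagProj s ∈ Dset :=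
  ⟨isCompactOperator_diagProj s, fun j => ⟨if j ∈ s then 1 else 0, by
    rw [diagProj_e]; split_ifs <;> simp⟩⟩

lemma smul_mem_Dset {T : Op} (hT : T ∈ Dset) (c : ℂ) : c • T ∈ Dset :=
  ⟨hT.1.smul c, fun i => let ⟨d, hd⟩ := hT.2 i; ⟨c * d, by simp [hd, mul_smul]⟩⟩

lemma mul_mem_CK {V : Type} [TopologicalSpace V] (a : C₀(V, Op)) {b : C₀(V, Op)}
    (hb : b ∈ CK V) : a * b ∈ CK V :=
  fun p => (hb p).clm_comp (a p)

lemma IsPos.isSelfAdjoint {V : Type} [TopologicalSpace V] {u : C₀(V, Op)} (hu : IsPos V u) :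
    IsSelfAdjoint u :=
  ZeroAtInftyContinuousMap.ext fun p => (hu p).isSelfAdjoint.star_eq

section BumpSMul

variable {V : Type} [TopologicalSpace V] {φ : C(V, ℝ)} (hφ : HasCompactSupport φ) (T : Op)

def bumpSMul : C₀(V, Op) where
  toFun p := (φ p : ℂ) • T
  continuous_toFun := by fun_prop
  zero_at_infty' := (hφ.comp_left Complex.ofReal_zero).smul_right.is_zero_at_infty

@[simp]
lemma bumpSMul_apply (p : V) : bumpSMul hφ T p = (φ p : ℂ) • T := rfl

variable {hφ T}

lemma bumpSMul_mem_CD (hT : T ∈ Dset) : bumpSMul hφ T ∈ CD V :=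
  fun _ => smul_mem_Dset hT _

lemma isPos_bumpSMul (hφ0 : ∀ p, 0 ≤ φ p) (hT : T.IsPositive) : IsPos V (bumpSMul hφ T) :=
  fun p => hT.smul_of_nonneg (by simpa using hφ0 p)

lemma norm_bumpSMul_le (hφ1 : ∀ p, φ p ∈ Set.Icc 0 1) (hT : ‖T‖ ≤ 1) : ‖bumpSMul hφ T‖ ≤ 1 := by
  refine (ZeroAtInftyContinuousMap.norm_le_iff _ zero_le_one).mpr fun p => ?_
  rw [bumpSMul_apply, norm_smul, Complex.norm_real, Real.norm_of_nonneg (hφ1 p).1]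
  exact mul_le_one₀ (hφ1 p).2 (norm_nonneg T) hT

end BumpSMul

theorem exists_mem_CD_forall_norm_mul_sub_lt {V : Type} [TopologicalSpace V]
    [LocallyCompactSpace V] [T2Space V] (G : Finset C₀(V, Op)) (hG : ↑G ⊆ CK V) {δ : ℝ}
    (hδ : 0 < δ) : ∃ u ∈ CD V, IsPos V u ∧ ‖u‖ ≤ 1 ∧ ∀ b ∈ G, ‖u * b - b‖ < δ := by
  obtain ⟨K, hK, hsmall⟩ :=
    ZeroAtInftyContinuousMap.exists_isCompact_forall_norm_lt G (δ := δ / 4) (by positivity)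
  obtain ⟨s, hs⟩ : ∃ s, ∀ b ∈ G, ∀ p ∈ K, dist (b p) (diagProj s * b p) < δ / 2 := by
    refine ((eventually_all_finset (l := (atTop : Filter (Finset ℤ))) G).mpr
      fun b hb => ?_).exists
    exact Metric.tendstoUniformlyOn_iff.mp (tendstoUniformlyOn_comp_of_isCompactOperator (C := 1)
      (fun s => NNReal.coe_le_coe.mp (norm_diagProj_le s)) tendsto_diagProj_apply b.continuous
      (hG hb) hK) (δ / 2) (half_pos hδ)
  obtain ⟨φ, hφK, -, hφ, hφ01⟩ :=
    exists_continuous_one_zero_of_isCompact hK isClosed_empty (Set.disjoint_empty K)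
  set u := bumpSMul hφ (diagProj s)
  have hu1 : ‖u‖ ≤ 1 := norm_bumpSMul_le hφ01 (norm_diagProj_le s)
  refine ⟨u, bumpSMul_mem_CD (diagProj_mem_Dset s), isPos_bumpSMul (fun p => (hφ01 p).1)
    (isPositive_diagProj s), hu1, fun b hb => ?_⟩
  refine ((ZeroAtInftyContinuousMap.norm_le_iff _ (half_pos hδ).le).mpr fun p => ?_).trans_lt
    (half_lt_self hδ)
  by_cases hp : p ∈ K
  · have hup : u p = diagProj s := by simp [u, hφK hp]
    simpa [hup, dist_eq_norm'] using (hs b hb p hp).le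
  · have hup : ‖u p‖ ≤ 1 := (ZeroAtInftyContinuousMap.norm_le_iff _ zero_le_one).mp hu1 p
    calc ‖u p * b p - b p‖ ≤ ‖u p‖ * ‖b p‖ + ‖b p‖ :=
          (norm_sub_le _ _).trans (by gcongr; exact norm_mul_le _ _)
      _ ≤ 1 * ‖b p‖ + ‖b p‖ := by gcongr
      _ ≤ δ / 2 := by linarith [hsmall p hp b hb]

/-- Let `V` be a locally compact Hausdorff space, `H = ℓ²(ℤ, ℂ)`. For every
finite subset `F` of `C₀(V, K(H))` and every `ε > 0` there is a positive `u ∈ C₀(V, 𝒟)` of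
norm at most `1` with `‖u a − a‖ < ε` and `‖a u − a‖ < ε` for all `a ∈ F`; that is,
`C₀(V, 𝒟)` contains an approximate unit of `C₀(V, K(H))`. -/
theorem cd_contains_approximate_unit
    (V : Type) [TopologicalSpace V] [LocallyCompactSpace V] [T2Space V]
    (F : Finset C₀(V, Op)) (hF : ↑F ⊆ CK V) (ε : ℝ) (hε : 0 < ε) :
    ∃ u ∈ CD V, IsPos V u ∧ ‖u‖ ≤ 1 ∧ ∀ a ∈ F, ‖u * a - a‖ < ε ∧ ‖a * u - a‖ < ε := by
  classical
  set G := F ∪ F.image fun a => star a * a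
  have hG : ↑G ⊆ CK V := by
    intro b hb
    rcases Finset.mem_union.mp hb with hb | hb
    · exact hF hb
    · obtain ⟨a, ha, rfl⟩ := Finset.mem_image.mp hb
      exact mul_mem_CK _ (hF ha)
  obtain ⟨u, huCD, hupos, hu1, hu⟩ :=
    exists_mem_CD_forall_norm_mul_sub_lt G hG (δ := min ε (ε ^ 2 / 2)) (by positivity)
  refine ⟨u, huCD, hupos, hu1, fun a ha => ⟨?_, ?_⟩⟩
  · exact (hu a (Finset.mem_union_left _ ha)).trans_le (min_le_left _ _)
  · have hstar : ‖u * (star a * a) - star a * a‖ < ε ^ 2 / 2 :=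
      (hu _ (Finset.mem_union_right _ (Finset.mem_image_of_mem _ ha))).trans_le (min_le_right _ _)
    have := CStarRing.norm_mul_sub_self_sq_le hupos.isSelfAdjoint hu1 a
    exact (pow_lt_pow_iff_left₀ (norm_nonneg (a * u - a)) hε.le two_ne_zero).mp (by linarith)
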